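/- arXiv:1301.0155 — 3 statements merged into one kernel-verified Lean document; each statement's English description precedes it below -/
import Mathlib

section
/- Let 0 < q < 1. For every x > 0, the inequality (ψ_q'(x) − ln q)² + ψ_q''(x) > 0 holds. -/
open Real Set Filter Topology

/-- The q-digamma function for `0 < q < 1`:
`ψ_q(x) = −ln(1−q) + (ln q)·∑_{k=1}^∞ q^{kx}/(1 − q^k)`. -/
noncomputable def qDigammaLt (q x : ℝ) : ℝ :=
  -Real.log (1 - q) +
    Real.log q * ∑' k : ℕ, q ^ (((k : ℝ) + 1) * x) / (1 - q ^ (k + 1))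

/-!
Put `L = -log q` and `S_j(y) = ∑ (k+1)^j q^{(k+1)y} / (1 - q^{k+1})`. Differentiating termwise,
`ψ_q' = L² S₁` and `ψ_q'' = -L³ S₂`, so the claim is `G(y) > 0` for
`G(y) := (L S₁(y) + 1)² - L S₂(y)`. As `y → ∞`, `S_j(y) → 0` and hence `G(y) → 1`;
so it suffices that `G(y + 1) ≤ G(y)`. Since `(1 - q^{k+1}) q^{(k+1)y} = r^{k+1} - (qr)^{k+1}`
with `r = q^y`, the shift removes from `S_j` exactly `∑ (k+1)^j r^{k+1}`, which is `r/(1-r)²`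
for `j = 1` and `r(1+r)/(1-r)³` for `j = 2`. Bounding `L S₁(y+1)` from below termwise with
`-log p ≥ 2(1-p)/(1+p)` and using `L ≥ 1 - q`, the inequality `G(y + 1) ≤ G(y)` becomes a
polynomial inequality in `q, r ∈ [0, 1)`.
-/
lemma hasSum_succ_mul_geometric {r : ℝ} (hr0 : 0 ≤ r) (hr1 : r < 1) :
    HasSum (fun k : ℕ => ((k : ℝ) + 1) * r ^ (k + 1)) (r / (1 - r) ^ 2) := by
  have h := hasSum_coe_mul_geometric_of_norm_lt_one (𝕜 := ℝ)
    (by rwa [norm_of_nonneg hr0])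
  simpa using (hasSum_nat_add_iff' 1).mpr h

lemma hasSum_succ_sq_mul_geometric {r : ℝ} (hr0 : 0 ≤ r) (hr1 : r < 1) :
    HasSum (fun k : ℕ => ((k : ℝ) + 1) ^ 2 * r ^ (k + 1)) (r * (1 + r) / (1 - r) ^ 3) := by
  have hs : Summable fun n : ℕ => (n : ℝ) ^ 2 * r ^ n :=
    summable_pow_mul_geometric_of_norm_lt_one 2 (by rwa [norm_of_nonneg hr0])
  set A := ∑' n : ℕ, (n : ℝ) ^ 2 * r ^ n
  have hshift : HasSum (fun k : ℕ => ((k : ℝ) + 1) ^ 2 * r ^ (k + 1)) A := by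
    simpa using (hasSum_nat_add_iff' 1).mpr hs.hasSum
  -- Expanding `(k + 1)² = k² + 2k + 1` expresses the same series through `A` itself.
  have hexpand : HasSum (fun k : ℕ => ((k : ℝ) + 1) ^ 2 * r ^ (k + 1))
      (r * (A + 2 * (r / (1 - r) ^ 2) + (1 - r)⁻¹)) := by
    have h := ((hs.hasSum.add (((hasSum_coe_mul_geometric_of_norm_lt_one (𝕜 := ℝ)
      (by rwa [norm_of_nonneg hr0])).mul_left 2))).add
      (hasSum_geometric_of_lt_one hr0 hr1)).mul_left r
    exact h.congr_fun fun k => by ring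
  have hA : A * (1 - r) = r * (2 * (r / (1 - r) ^ 2) + (1 - r)⁻¹) := by
    linear_combination hshift.unique hexpand
  have hr : 1 - r ≠ 0 := by linarith
  convert hshift using 1
  field_simp at hA ⊢
  linear_combination -hA

lemma summable_succ_pow_mul_geometric (j : ℕ) {r : ℝ} (hr0 : 0 ≤ r) (hr1 : r < 1) :
    Summable fun k : ℕ => ((k : ℝ) + 1) ^ j * r ^ (k + 1) := by
  have h := summable_pow_mul_geometric_of_norm_lt_one (R := ℝ) j (by rwa [norm_of_nonneg hr0])
  simpa using (summable_nat_add_iff 1).mpr h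

lemma rpow_succ_mul {q : ℝ} (hq : 0 ≤ q) (k : ℕ) (x : ℝ) :
    q ^ (((k : ℝ) + 1) * x) = (q ^ x) ^ (k + 1) := by
  rw [mul_comm, rpow_mul hq, ← Nat.cast_succ, rpow_natCast]

noncomputable def qSeries (q : ℝ) (b : ℕ → ℝ) (j : ℕ) (x : ℝ) : ℝ :=
  ∑' k : ℕ, ((k : ℝ) + 1) ^ j * b k * q ^ (((k : ℝ) + 1) * x)

section qSeries

variable {q C : ℝ} {b : ℕ → ℝ}

lemma norm_qSeries_term_le (hq0 : 0 < q) (hb : ∀ k, |b k| ≤ C) (j k : ℕ) (x : ℝ) :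
    ‖((k : ℝ) + 1) ^ j * b k * q ^ (((k : ℝ) + 1) * x)‖ ≤
      C * (((k : ℝ) + 1) ^ j * (q ^ x) ^ (k + 1)) := by
  rw [rpow_succ_mul hq0.le, norm_mul, norm_mul, norm_of_nonneg (by positivity),
    norm_of_nonneg (by positivity : (0 : ℝ) ≤ (q ^ x) ^ (k + 1)), Real.norm_eq_abs]
  calc ((k : ℝ) + 1) ^ j * |b k| * (q ^ x) ^ (k + 1)
      ≤ ((k : ℝ) + 1) ^ j * C * (q ^ x) ^ (k + 1) := by gcongr; exact hb k
    _ = _ := by ring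

lemma summable_qSeries (hq0 : 0 < q) (hq1 : q < 1) (hb : ∀ k, |b k| ≤ C) (j : ℕ) {x : ℝ}
    (hx : 0 < x) : Summable fun k : ℕ => ((k : ℝ) + 1) ^ j * b k * q ^ (((k : ℝ) + 1) * x) :=
  .of_norm_bounded ((summable_succ_pow_mul_geometric j (rpow_nonneg hq0.le x)
    (rpow_lt_one hq0.le hq1 hx)).mul_left C) (norm_qSeries_term_le hq0 hb j · x)

lemma hasDerivAt_qSeries (hq0 : 0 < q) (hq1 : q < 1) (hb : ∀ k, |b k| ≤ C) (j : ℕ) {x : ℝ}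
    (hx : 0 < x) : HasDerivAt (qSeries q b j) (log q * qSeries q b (j + 1) x) x := by
  have hterm : ∀ (k : ℕ) (z : ℝ),
      HasDerivAt (fun z => ((k : ℝ) + 1) ^ j * b k * q ^ (((k : ℝ) + 1) * z))
      (log q * (((k : ℝ) + 1) ^ (j + 1) * b k * q ^ (((k : ℝ) + 1) * z))) z := by
    intro k z
    refine ((((hasDerivAt_id' z).const_mul ((k : ℝ) + 1)).const_rpow hq0).const_mul
      (((k : ℝ) + 1) ^ j * b k)).congr_deriv ?_
    ring
  have hbound : ∀ (k : ℕ) (z : ℝ), z ∈ Ioi (x / 2) →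
      ‖log q * (((k : ℝ) + 1) ^ (j + 1) * b k * q ^ (((k : ℝ) + 1) * z))‖ ≤
        ‖log q‖ * (C * (((k : ℝ) + 1) ^ (j + 1) * (q ^ (x / 2)) ^ (k + 1))) := by
    intro k z hz
    rw [norm_mul]
    gcongr
    refine (norm_qSeries_term_le hq0 hb (j + 1) k z).trans ?_
    have hC : 0 ≤ C := (abs_nonneg _).trans (hb 0)
    have hqz : q ^ z ≤ q ^ (x / 2) := rpow_le_rpow_of_exponent_ge hq0 hq1.le (le_of_lt hz)
    gcongr
  have hxt : x ∈ Ioi (x / 2) := half_lt_self hx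
  have h := hasDerivAt_tsum_of_isPreconnected
    (((summable_succ_pow_mul_geometric (j + 1) (rpow_nonneg hq0.le _)
      (rpow_lt_one hq0.le hq1 (half_pos hx))).mul_left C).mul_left ‖log q‖)
    isOpen_Ioi isPreconnected_Ioi (fun k z _ => hterm k z) hbound hxt
    (summable_qSeries hq0 hq1 hb j hx) hxt
  rwa [tsum_mul_left] at h

lemma qSeries_nonneg (hq0 : 0 < q) (hb0 : ∀ k, 0 ≤ b k) (j : ℕ) (x : ℝ) :
    0 ≤ qSeries q b j x :=
  tsum_nonneg fun k => by have := hb0 k; positivity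

lemma qSeries_add_le (hq0 : 0 < q) (hq1 : q < 1) (hb0 : ∀ k, 0 ≤ b k) (hb : ∀ k, |b k| ≤ C)
    (j : ℕ) {x t : ℝ} (hx : 0 < x) (ht : 0 ≤ t) :
    qSeries q b j (x + t) ≤ q ^ t * qSeries q b j x := by
  rw [qSeries, qSeries, ← tsum_mul_left]
  refine (summable_qSeries hq0 hq1 hb j (by positivity)).tsum_le_tsum (fun k => ?_)
    ((summable_qSeries hq0 hq1 hb j hx).mul_left _)
  have hqt : q ^ (((k : ℝ) + 1) * t) ≤ q ^ t :=
    rpow_le_rpow_of_exponent_ge hq0 hq1.le (le_mul_of_one_le_left ht (by simp))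
  have := hb0 k
  calc ((k : ℝ) + 1) ^ j * b k * q ^ (((k : ℝ) + 1) * (x + t))
      = ((k : ℝ) + 1) ^ j * b k * q ^ (((k : ℝ) + 1) * x) * q ^ (((k : ℝ) + 1) * t) := by
        rw [mul_add, rpow_add hq0, ← mul_assoc]
    _ ≤ ((k : ℝ) + 1) ^ j * b k * q ^ (((k : ℝ) + 1) * x) * q ^ t := by gcongr
    _ = _ := mul_comm _ _

lemma tendsto_qSeries_atTop (hq0 : 0 < q) (hq1 : q < 1) (hb0 : ∀ k, 0 ≤ b k)
    (hb : ∀ k, |b k| ≤ C) (j : ℕ) : Tendsto (qSeries q b j) atTop (𝓝 0) := by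
  have hlim : Tendsto (fun y : ℝ => q ^ (y - 1) * qSeries q b j 1) atTop (𝓝 0) := by
    simpa [sub_eq_add_neg] using ((tendsto_rpow_atTop_of_base_lt_one q (by linarith) hq1).comp
      (tendsto_atTop_add_const_right _ (-1) tendsto_id)).mul_const (qSeries q b j 1)
  refine squeeze_zero' (.of_forall (qSeries_nonneg hq0 hb0 j)) ?_ hlim
  filter_upwards [eventually_ge_atTop 1] with y hy
  simpa using qSeries_add_le hq0 hq1 hb0 hb j one_pos (sub_nonneg.mpr hy)

end qSeries

lemma one_add_div_one_sub_le {q r L : ℝ} (hq0 : 0 ≤ q) (hq1 : q ≤ 1) (hr0 : 0 ≤ r)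
    (hr1 : r < 1) (hL : 1 - q ≤ L) :
    (1 + r) / (1 - r) ≤ L * (r / (1 - r) ^ 2 + q * r / (1 - q * r) ^ 2) + 2 / (1 - q * r) := by
  have hr : 0 < 1 - r := by linarith
  have hqr : 0 < 1 - q * r := by nlinarith
  have hmono : (1 - q) * (r / (1 - r) ^ 2 + q * r / (1 - q * r) ^ 2) ≤
      L * (r / (1 - r) ^ 2 + q * r / (1 - q * r) ^ 2) := by gcongr
  -- At `L = 1 - q` the gap is a manifestly nonnegative polynomial over a positive denominator.
  have key : (1 - q) * (r / (1 - r) ^ 2 + q * r / (1 - q * r) ^ 2) + 2 / (1 - q * r) -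
      (1 + r) / (1 - r) = (q ^ 2 * (1 - r) ^ 4 + (1 - q ^ 2) * (1 - r) ^ 3 + (1 - q) ^ 3 * r ^ 3) /
        ((1 - r) ^ 2 * (1 - q * r) ^ 2) := by
    field_simp
    ring
  have hnum : 0 ≤ q ^ 2 * (1 - r) ^ 4 + (1 - q ^ 2) * (1 - r) ^ 3 + (1 - q) ^ 3 * r ^ 3 := by
    have : 0 ≤ 1 - q ^ 2 := by nlinarith
    have : 0 ≤ 1 - q := by linarith
    positivity
  linarith [hmono, div_nonneg hnum (by positivity : (0 : ℝ) ≤ (1 - r) ^ 2 * (1 - q * r) ^ 2)]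

lemma two_mul_one_sub_le_neg_log_mul {p : ℝ} (hp0 : 0 < p) (hp1 : p ≤ 1) :
    2 * (1 - p) ≤ -log p * (1 + p) := by
  have h := le_log_one_add_of_nonneg (sub_nonneg.mpr ((one_le_inv₀ hp0).mpr hp1))
  have e : 2 * (p⁻¹ - 1) / (p⁻¹ - 1 + 2) = 2 * (1 - p) / (1 + p) := by
    rw [show p⁻¹ - 1 + 2 = (1 + p) / p by field_simp; ring]
    field_simp
  rw [add_sub_cancel, log_inv, e, div_le_iff₀ (by positivity)] at h
  exact h

noncomputable def qDigammaCoeff (q : ℝ) (k : ℕ) : ℝ := (1 - q ^ (k + 1))⁻¹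

section qDigammaCoeff

variable {q : ℝ}

lemma one_sub_pow_succ_pos (hq0 : 0 ≤ q) (hq1 : q < 1) (k : ℕ) : 0 < 1 - q ^ (k + 1) :=
  sub_pos.mpr (pow_lt_one₀ hq0 hq1 k.succ_ne_zero)

lemma qDigammaCoeff_nonneg (hq0 : 0 ≤ q) (hq1 : q < 1) (k : ℕ) : 0 ≤ qDigammaCoeff q k :=
  (inv_pos.mpr (one_sub_pow_succ_pos hq0 hq1 k)).le

lemma abs_qDigammaCoeff_le (hq0 : 0 ≤ q) (hq1 : q < 1) (k : ℕ) :
    |qDigammaCoeff q k| ≤ (1 - q)⁻¹ := by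
  rw [abs_of_nonneg (qDigammaCoeff_nonneg hq0 hq1 k), qDigammaCoeff]
  have : q ^ (k + 1) ≤ q := pow_le_of_le_one hq0 hq1.le k.succ_ne_zero
  have := one_sub_pow_succ_pos hq0 hq1 k
  gcongr

lemma qDigammaLt_eq_qSeries (q : ℝ) :
    qDigammaLt q = fun x => -log (1 - q) + log q * qSeries q (qDigammaCoeff q) 0 x := by
  funext x
  simp only [qDigammaLt, qSeries, qDigammaCoeff, pow_zero, one_mul, div_eq_inv_mul]

lemma hasDerivAt_qDigammaLt (hq0 : 0 < q) (hq1 : q < 1) {x : ℝ} (hx : 0 < x) :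
    HasDerivAt (qDigammaLt q) (log q ^ 2 * qSeries q (qDigammaCoeff q) 1 x) x := by
  rw [qDigammaLt_eq_qSeries]
  refine (((hasDerivAt_qSeries hq0 hq1 (abs_qDigammaCoeff_le hq0.le hq1) 0 hx).const_mul
    (log q)).const_add _).congr_deriv ?_
  ring

lemma qSeries_qDigammaCoeff_sub_add_one (hq0 : 0 < q) (hq1 : q < 1) (j : ℕ) {y : ℝ}
    (hy : 0 < y) : qSeries q (qDigammaCoeff q) j y - qSeries q (qDigammaCoeff q) j (y + 1) =
      ∑' k : ℕ, ((k : ℝ) + 1) ^ j * (q ^ y) ^ (k + 1) := by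
  have hb := abs_qDigammaCoeff_le hq0.le hq1
  rw [qSeries, qSeries, ← (summable_qSeries hq0 hq1 hb j hy).tsum_sub
    (summable_qSeries hq0 hq1 hb j (by positivity))]
  congr 1 with k
  have := one_sub_pow_succ_pos hq0.le hq1 k
  rw [rpow_succ_mul hq0.le, rpow_succ_mul hq0.le, rpow_add_one hq0.ne', mul_pow, qDigammaCoeff]
  field_simp

lemma one_add_le_mul_qDigammaCoeff (hq0 : 0 < q) (hq1 : q < 1) (k : ℕ) :
    1 + -log q * ((k : ℝ) + 1) / 2 ≤ -log q * ((k : ℝ) + 1) * qDigammaCoeff q k := by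
  have hpos := one_sub_pow_succ_pos hq0.le hq1 k
  have h := two_mul_one_sub_le_neg_log_mul (pow_pos hq0 (k + 1)) (pow_le_one₀ hq0.le hq1.le)
  rw [log_pow, Nat.cast_succ] at h
  rw [qDigammaCoeff, ← div_eq_mul_inv, le_div_iff₀ hpos]
  linarith

lemma geometric_le_neg_log_mul_qSeries (hq0 : 0 < q) (hq1 : q < 1) {y : ℝ} (hy : 0 < y) :
    q ^ y / (1 - q ^ y) + -log q / 2 * (q ^ y / (1 - q ^ y) ^ 2) ≤
      -log q * qSeries q (qDigammaCoeff q) 1 y := by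
  set r := q ^ y
  have hr0 : 0 ≤ r := rpow_nonneg hq0.le y
  have hr1 : r < 1 := rpow_lt_one hq0.le hq1 hy
  have hlhs : HasSum (fun k : ℕ => (1 + -log q * ((k : ℝ) + 1) / 2) * r ^ (k + 1))
      (r / (1 - r) + -log q / 2 * (r / (1 - r) ^ 2)) := by
    have h := ((hasSum_geometric_of_lt_one hr0 hr1).mul_left r).add
      ((hasSum_succ_mul_geometric hr0 hr1).mul_left (-log q / 2))
    rw [← div_eq_mul_inv] at h
    exact h.congr_fun fun k => by ring
  rw [← hlhs.tsum_eq, qSeries, ← tsum_mul_left]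
  refine hlhs.summable.tsum_le_tsum (fun k => ?_)
    ((summable_qSeries hq0 hq1 (abs_qDigammaCoeff_le hq0.le hq1) 1 hy).mul_left _)
  rw [rpow_succ_mul hq0.le]
  have := one_add_le_mul_qDigammaCoeff hq0 hq1 k
  calc (1 + -log q * ((k : ℝ) + 1) / 2) * r ^ (k + 1)
      ≤ -log q * ((k : ℝ) + 1) * qDigammaCoeff q k * r ^ (k + 1) := by gcongr
    _ = _ := by ring

end qDigammaCoeff

/-- Normalised so that `(ψ_q' x - log q) ^ 2 + ψ_q'' x = (log q) ^ 2 * qDigammaGap q x`. -/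
noncomputable def qDigammaGap (q y : ℝ) : ℝ :=
  (-log q * qSeries q (qDigammaCoeff q) 1 y + 1) ^ 2 - -log q * qSeries q (qDigammaCoeff q) 2 y

section qDigammaGap

variable {q : ℝ}

lemma qDigammaGap_add_one_le (hq0 : 0 < q) (hq1 : q < 1) {y : ℝ} (hy : 0 < y) :
    qDigammaGap q (y + 1) ≤ qDigammaGap q y := by
  have hr0 : 0 ≤ q ^ y := rpow_nonneg hq0.le y
  have hr1 : q ^ y < 1 := rpow_lt_one hq0.le hq1 hy
  have hS := qSeries_qDigammaCoeff_sub_add_one hq0 hq1 1 hy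
  have hT := qSeries_qDigammaCoeff_sub_add_one hq0 hq1 2 hy
  simp only [pow_one] at hS
  rw [(hasSum_succ_mul_geometric hr0 hr1).tsum_eq] at hS
  rw [(hasSum_succ_sq_mul_geometric hr0 hr1).tsum_eq] at hT
  have hlow := geometric_le_neg_log_mul_qSeries hq0 hq1 (show 0 < y + 1 by linarith)
  rw [rpow_add_one hq0.ne', mul_comm _ q] at hlow
  have hLq : 1 - q ≤ -log q := by linarith [log_le_sub_one_of_pos hq0]
  have hrat := one_add_div_one_sub_le hq0.le hq1.le hr0 hr1 hLq
  have hL : 0 < -log q := neg_pos.mpr (log_neg hq0 hq1)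
  simp only [qDigammaGap]
  set L := -log q
  set S := qSeries q (qDigammaCoeff q) 1
  set T := qSeries q (qDigammaCoeff q) 2
  set r := q ^ y
  have hqr : 0 < 1 - q * r := by nlinarith
  have hbracket : (1 + r) / (1 - r) ≤ L * (r / (1 - r) ^ 2) + 2 * (L * S (y + 1)) + 2 := by
    have : 2 * (q * r / (1 - q * r)) + 2 = 2 / (1 - q * r) := by field_simp; ring
    linarith
  have hfac : r * (1 + r) / (1 - r) ^ 3 = r / (1 - r) ^ 2 * ((1 + r) / (1 - r)) := by
    have : 1 - r ≠ 0 := by linarith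
    field_simp
  calc (L * S (y + 1) + 1) ^ 2 - L * T (y + 1)
      = (L * S y + 1) ^ 2 - L * T y - L * (r / (1 - r) ^ 2) *
          (L * (r / (1 - r) ^ 2) + 2 * (L * S (y + 1)) + 2 - (1 + r) / (1 - r)) := by
        rw [show S y = S (y + 1) + r / (1 - r) ^ 2 by linarith,
          show T y = T (y + 1) + r * (1 + r) / (1 - r) ^ 3 by linarith, hfac]
        ring
    _ ≤ (L * S y + 1) ^ 2 - L * T y := sub_le_self _ (mul_nonneg (by positivity) (by linarith))

lemma tendsto_qDigammaGap_atTop (hq0 : 0 < q) (hq1 : q < 1) :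
    Tendsto (qDigammaGap q) atTop (𝓝 1) := by
  have hb0 := qDigammaCoeff_nonneg hq0.le hq1
  have hb := abs_qDigammaCoeff_le hq0.le hq1
  convert ((((tendsto_qSeries_atTop hq0 hq1 hb0 hb 1).const_mul (-log q)).add_const 1).pow 2).sub
    ((tendsto_qSeries_atTop hq0 hq1 hb0 hb 2).const_mul (-log q)) using 1
  · rfl
  · simp

lemma one_le_qDigammaGap (hq0 : 0 < q) (hq1 : q < 1) {x : ℝ} (hx : 0 < x) :
    1 ≤ qDigammaGap q x := by
  have hanti : ∀ n : ℕ, qDigammaGap q (x + n) ≤ qDigammaGap q x := by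
    intro n
    induction n with
    | zero => simp
    | succ n ih =>
      rw [Nat.cast_succ, ← add_assoc]
      exact (qDigammaGap_add_one_le hq0 hq1 (by positivity)).trans ih
  exact le_of_tendsto' ((tendsto_qDigammaGap_atTop hq0 hq1).comp
    (tendsto_atTop_add_const_left _ x tendsto_natCast_atTop_atTop)) hanti

end qDigammaGap

/-- For `0 < q < 1` and `x > 0`, `(ψ_q′(x) − ln q)² + ψ_q″(x) > 0`. -/
theorem positivity_q_lt_one (q : ℝ) (hq0 : 0 < q) (hq1 : q < 1) (x : ℝ) (hx : 0 < x) :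
    0 < (deriv (qDigammaLt q) x - Real.log q) ^ 2 + deriv (deriv (qDigammaLt q)) x := by
  have hψ'' : HasDerivAt (deriv (qDigammaLt q))
      (log q ^ 2 * (log q * qSeries q (qDigammaCoeff q) 2 x)) x :=
    ((hasDerivAt_qSeries hq0 hq1 (abs_qDigammaCoeff_le hq0.le hq1) 1 hx).const_mul
      (log q ^ 2)).congr_of_eventuallyEq
      ((eventually_gt_nhds hx).mono fun y hy => (hasDerivAt_qDigammaLt hq0 hq1 hy).deriv)
  rw [(hasDerivAt_qDigammaLt hq0 hq1 hx).deriv, hψ''.deriv]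
  have hgap : 0 < qDigammaGap q x := one_pos.trans_le (one_le_qDigammaGap hq0 hq1 hx)
  have hlog : log q ≠ 0 := (log_neg hq0 hq1).ne
  calc 0 < log q ^ 2 * qDigammaGap q x := by positivity
    _ = _ := by
      simp only [qDigammaGap]
      ring
end

section
/- Let q > 1. The function φ̃_q(x) = ψ_q(x) + ln(exp((ln q)/(q^x − 1)) − 1) is strictly increasing with respect to x on (0, ∞). -/
/-!
Put `t = log q` and `y = q⁻ˣ`. Differentiating the series termwise, the derivative of `φ̃_q` is
`t · (1 + ∑_{k ≥ 1} h(t k) yᵏ - h(a) / (1 - y))` with `h(u) = u / (1 - e⁻ᵘ)` (`toddFun`) and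
`a = t y / (1 - y)`. The function `h` is convex on `(0, ∞)`; summing its tangent line at `a`
against the weights `yᵏ` (whose first moment is `a / (t (1 - y))`) bounds the series below by
`h(a) / (1 - y) - (h(a) - a h'(a))`. The intercept `h(a) - a h'(a) = a² e⁻ᵃ / (1 - e⁻ᵃ)²` of the
tangent is `< 1` because `a / 2 < sinh (a / 2)`, so the derivative is positive.
-/

open Real Set Filter Topology

/-- The q-digamma function for `q > 1`:
`ψ_q(x) = −ln(q−1) + (ln q)·(x − 1/2 − ∑_{k=1}^∞ q^{−kx}/(1 − q^{−k}))`. -/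
noncomputable def qDigammaGt (q x : ℝ) : ℝ :=
  -Real.log (q - 1) +
    Real.log q *
      (x - 1 / 2 - ∑' k : ℕ, q ^ (-(((k : ℝ) + 1) * x)) / (1 - q ^ (-((k : ℝ) + 1))))

noncomputable def toddFun (u : ℝ) : ℝ := u / (1 - exp (-u))

lemma one_sub_exp_neg_pos {u : ℝ} (hu : 0 < u) : 0 < 1 - exp (-u) :=
  sub_pos.2 (exp_lt_one_iff.2 (neg_lt_zero.2 hu))

lemma hasDerivAt_exp_neg (u : ℝ) : HasDerivAt (fun v => exp (-v)) (-exp (-u)) u := by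
  simpa using (hasDerivAt_neg u).exp

lemma hasDerivAt_toddFun {u : ℝ} (hu : 0 < u) :
    HasDerivAt toddFun ((1 - exp (-u) - u * exp (-u)) / (1 - exp (-u)) ^ 2) u := by
  refine ((hasDerivAt_id' u).div ((hasDerivAt_exp_neg u).const_sub 1)
    (one_sub_exp_neg_pos hu).ne').congr_deriv ?_
  ring

lemma hasDerivAt_deriv_toddFun {u : ℝ} (hu : 0 < u) :
    HasDerivAt (fun v => (1 - exp (-v) - v * exp (-v)) / (1 - exp (-v)) ^ 2)
      (exp (-u) * (u - 2 + (2 + u) * exp (-u)) / (1 - exp (-u)) ^ 3) u := by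
  have hv := (one_sub_exp_neg_pos hu).ne'
  refine ((((hasDerivAt_exp_neg u).const_sub 1).sub ((hasDerivAt_id' u).mul
    (hasDerivAt_exp_neg u))).div (((hasDerivAt_exp_neg u).const_sub 1).pow 2)
    (pow_ne_zero 2 hv)).congr_deriv ?_
  simp only [Pi.pow_apply, Pi.sub_apply, Pi.mul_apply]
  field_simp
  ring

lemma sub_two_add_mul_exp_neg_nonneg {u : ℝ} (hu : 0 ≤ u) : 0 ≤ u - 2 + (2 + u) * exp (-u) := by
  have hderiv (v : ℝ) : HasDerivAt (fun v => v - 2 + (2 + v) * exp (-v))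
      (1 - (1 + v) * exp (-v)) v := by
    refine (((hasDerivAt_id' v).sub_const 2).add (((hasDerivAt_id' v).const_add 2).mul
      (hasDerivAt_exp_neg v))).congr_deriv ?_
    ring
  have hmono : MonotoneOn (fun v => v - 2 + (2 + v) * exp (-v)) (Ici 0) := by
    refine monotoneOn_of_hasDerivWithinAt_nonneg (convex_Ici 0)
      (fun v _ => (hderiv v).continuousAt.continuousWithinAt)
      (fun v _ => (hderiv v).hasDerivWithinAt) fun v _ => ?_
    rw [sub_nonneg, exp_neg, ← div_eq_mul_inv, div_le_one (exp_pos v)]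
    linarith [add_one_le_exp v]
  simpa using hmono self_mem_Ici hu hu

lemma convexOn_toddFun : ConvexOn ℝ (Ioi 0) toddFun := by
  refine convexOn_of_hasDerivWithinAt2_nonneg (convex_Ioi 0)
    (fun u hu => (hasDerivAt_toddFun hu).continuousAt.continuousWithinAt)
    (fun u hu => (hasDerivAt_toddFun (interior_subset hu)).hasDerivWithinAt)
    (fun u hu => (hasDerivAt_deriv_toddFun (interior_subset hu)).hasDerivWithinAt) fun u hu => ?_
  rw [interior_Ioi] at hu
  have := one_sub_exp_neg_pos hu
  have := sub_two_add_mul_exp_neg_nonneg hu.le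
  positivity

lemma ConvexOn.add_mul_sub_le_of_hasDerivAt {S : Set ℝ} {f : ℝ → ℝ} {f' x y : ℝ}
    (hf : ConvexOn ℝ S f) (hx : x ∈ S) (hy : y ∈ S) (hfx : HasDerivAt f f' x) :
    f x + f' * (y - x) ≤ f y := by
  rcases lt_trichotomy y x with hyx | rfl | hxy
  · have := hf.slope_le_of_hasDerivAt hy hx hyx hfx
    rw [slope_def_field, div_le_iff₀ (sub_pos.2 hyx)] at this
    linarith
  · simp
  · have := hf.le_slope_of_hasDerivAt hx hy hxy hfx
    rw [slope_def_field, le_div_iff₀ (sub_pos.2 hxy)] at this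
    linarith

lemma toddFun_sub_mul_deriv_lt_one {a : ℝ} (ha : 0 < a) :
    toddFun a - a * deriv toddFun a < 1 := by
  have hv := one_sub_exp_neg_pos ha
  have hhalf : exp (-(a / 2)) ^ 2 = exp (-a) := by rw [← exp_nat_mul]; ring_nf
  -- `a / 2 < sinh (a / 2)`, multiplied by `2 exp (-(a / 2))`
  have hsinh : a * exp (-(a / 2)) < 1 - exp (-a) := by
    have := mul_lt_mul_of_pos_right (self_lt_sinh_iff.2 (half_pos ha)) (exp_pos (-(a / 2)))
    rw [sinh_eq] at this
    have hexp : exp (a / 2) * exp (-(a / 2)) = 1 := by rw [← exp_add]; simp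
    nlinarith
  have hsq : a ^ 2 * exp (-a) < (1 - exp (-a)) ^ 2 := by
    rw [← hhalf, ← mul_pow, hhalf]
    exact pow_lt_pow_left₀ hsinh (by positivity) two_ne_zero
  have hval : toddFun a - a * deriv toddFun a = a ^ 2 * exp (-a) / (1 - exp (-a)) ^ 2 := by
    rw [(hasDerivAt_toddFun ha).deriv, toddFun]
    field_simp
    ring
  rwa [hval, div_lt_one (by positivity)]

lemma hasSum_pow_succ {y : ℝ} (hy0 : 0 ≤ y) (hy1 : y < 1) :
    HasSum (fun k : ℕ => y ^ (k + 1)) (y / (1 - y)) := by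
  simpa only [pow_succ', div_eq_mul_inv] using (hasSum_geometric_of_lt_one hy0 hy1).mul_left y

lemma hasSum_succ_mul_pow_succ {y : ℝ} (hy0 : 0 ≤ y) (hy1 : y < 1) :
    HasSum (fun k : ℕ => ((k : ℝ) + 1) * y ^ (k + 1)) (y / (1 - y) ^ 2) := by
  have := hasSum_coe_mul_geometric_of_norm_lt_one (by rwa [norm_of_nonneg hy0])
  rw [← hasSum_nat_add_iff' 1] at this
  simpa using this

lemma toddFun_nonneg (s : ℝ) : 0 ≤ toddFun s := by
  rcases le_total 0 s with hs | hs
  · exact div_nonneg hs (sub_nonneg.2 (exp_le_one_iff.2 (neg_nonpos.2 hs)))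
  · exact div_nonneg_of_nonpos hs (sub_nonpos.2 (one_le_exp_iff.2 (neg_nonneg.2 hs)))

lemma toddFun_le_div {t s : ℝ} (ht : 0 < t) (hts : t ≤ s) : toddFun s ≤ s / (1 - exp (-t)) :=
  div_le_div_of_nonneg_left (ht.le.trans hts) (one_sub_exp_neg_pos ht) (by gcongr)

lemma summable_toddFun_mul_pow {t y : ℝ} (ht : 0 < t) (hy0 : 0 ≤ y) (hy1 : y < 1) :
    Summable (fun k : ℕ => toddFun (t * (k + 1)) * y ^ (k + 1)) := by
  have hdom := (hasSum_succ_mul_pow_succ hy0 hy1).summable.mul_left (t / (1 - exp (-t)))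
  refine hdom.of_nonneg_of_le (fun k => mul_nonneg (toddFun_nonneg _) (by positivity)) fun k => ?_
  calc toddFun (t * (k + 1)) * y ^ (k + 1)
      ≤ t * (k + 1) / (1 - exp (-t)) * y ^ (k + 1) := by
        gcongr
        exact toddFun_le_div ht (le_mul_of_one_le_right ht.le (by simp))
    _ = t / (1 - exp (-t)) * ((k + 1) * y ^ (k + 1)) := by ring

lemma toddFun_div_one_sub_lt_one_add_tsum {t y : ℝ} (ht : 0 < t) (hy0 : 0 < y) (hy1 : y < 1) :
    toddFun (t * y / (1 - y)) / (1 - y) <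
      1 + ∑' k : ℕ, toddFun (t * (k + 1)) * y ^ (k + 1) := by
  have h1y : 0 < 1 - y := sub_pos.2 hy1
  set a := t * y / (1 - y) with ha_def
  have ha : 0 < a := by positivity
  set β := deriv toddFun a
  set α := toddFun a - a * β with hα
  have htangent (k : ℕ) : α * y ^ (k + 1) + β * t * ((k + 1) * y ^ (k + 1)) ≤
      toddFun (t * (k + 1)) * y ^ (k + 1) := by
    have := convexOn_toddFun.add_mul_sub_le_of_hasDerivAt ha
      (show t * (k + 1) ∈ Ioi 0 from mem_Ioi.2 (by positivity))
      (hasDerivAt_toddFun ha).differentiableAt.hasDerivAt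
    calc α * y ^ (k + 1) + β * t * ((k + 1) * y ^ (k + 1))
        = (toddFun a + β * (t * (k + 1) - a)) * y ^ (k + 1) := by ring
      _ ≤ _ := by gcongr
  have hsum := hasSum_le htangent
    (((hasSum_pow_succ hy0.le hy1).mul_left α).add
      ((hasSum_succ_mul_pow_succ hy0.le hy1).mul_left (β * t)))
    (summable_toddFun_mul_pow ht hy0.le hy1).hasSum
  have hsplit : toddFun a / (1 - y) = α * (y / (1 - y)) + β * t * (y / (1 - y) ^ 2) + α := by
    rw [hα, ha_def]
    field_simp
    ring
  linarith [toddFun_sub_mul_deriv_lt_one ha]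

noncomputable def qDigammaSeries (t x : ℝ) : ℝ :=
  ∑' k : ℕ, exp (-(t * (k + 1) * x)) / (1 - exp (-(t * (k + 1))))

lemma qDigammaGt_eq {q : ℝ} (hq : 0 < q) (x : ℝ) :
    qDigammaGt q x = -log (q - 1) + log q * (x - 1 / 2 - qDigammaSeries (log q) x) := by
  simp only [qDigammaGt, qDigammaSeries, rpow_def_of_pos hq]
  congr 4 with k
  ring_nf

lemma exp_neg_mul_succ_mul (t x : ℝ) (k : ℕ) :
    exp (-(t * (k + 1) * x)) = exp (-(t * x)) ^ (k + 1) := by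
  rw [← exp_nat_mul]
  push_cast
  ring_nf

lemma hasDerivAt_exp_neg_mul_div (s x : ℝ) :
    HasDerivAt (fun x => exp (-(s * x)) / (1 - exp (-s))) (-(toddFun s * exp (-(s * x)))) x := by
  refine ((((hasDerivAt_id' x).const_mul s).fun_neg.exp).div_const _).congr_deriv ?_
  rw [toddFun]
  ring

lemma hasDerivAt_qDigammaSeries {t x : ℝ} (ht : 0 < t) (hx : 0 < x) :
    HasDerivAt (qDigammaSeries t)
      (-∑' k : ℕ, toddFun (t * (k + 1)) * exp (-(t * x)) ^ (k + 1)) x := by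
  have hy (z : ℝ) (hz : 0 < z) : exp (-(t * z)) < 1 :=
    exp_lt_one_iff.2 (neg_lt_zero.2 (mul_pos ht hz))
  have hbound (k : ℕ) (z : ℝ) (hz : z ∈ Ioi (x / 2)) :
      ‖-(toddFun (t * (k + 1)) * exp (-(t * (k + 1) * z)))‖ ≤
        toddFun (t * (k + 1)) * exp (-(t * (x / 2))) ^ (k + 1) := by
    rw [norm_neg, norm_of_nonneg (mul_nonneg (toddFun_nonneg _) (exp_pos _).le),
      exp_neg_mul_succ_mul]
    gcongr
    · exact toddFun_nonneg _
    · exact le_of_lt hz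
  have hsummable :
      Summable fun k : ℕ => exp (-(t * (k + 1) * x)) / (1 - exp (-(t * (k + 1)))) := by
    refine (((hasSum_pow_succ (exp_pos _).le (hy x hx)).summable).div_const
      (1 - exp (-t))).of_nonneg_of_le (fun k => div_nonneg (exp_pos _).le
        (one_sub_exp_neg_pos (by positivity)).le) fun k => ?_
    rw [exp_neg_mul_succ_mul]
    have htk : t ≤ t * (k + 1) := le_mul_of_one_le_right ht.le (by simp)
    exact div_le_div_of_nonneg_left (by positivity) (one_sub_exp_neg_pos ht) (by gcongr)
  have := hasDerivAt_tsum_of_isPreconnected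
    (summable_toddFun_mul_pow ht (exp_pos _).le (hy _ (half_pos hx))) isOpen_Ioi
    isPreconnected_Ioi (fun k z _ => hasDerivAt_exp_neg_mul_div (t * (k + 1)) z) hbound
    (mem_Ioi.2 (half_lt_self hx)) hsummable (mem_Ioi.2 (half_lt_self hx))
  simp only [tsum_neg, exp_neg_mul_succ_mul t x] at this
  exact this

lemma hasDerivAt_log_exp_div_exp_sub_one {t x : ℝ} (ht : 0 < t) (hx : 0 < x) :
    HasDerivAt (fun x => log (exp (t / (exp (t * x) - 1)) - 1))
      (-(t * (toddFun (t * exp (-(t * x)) / (1 - exp (-(t * x)))) / (1 - exp (-(t * x)))))) x := by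
  have hE : 0 < exp (t * x) - 1 := sub_pos.2 (one_lt_exp_iff.2 (by positivity))
  have hA : 0 < exp (t / (exp (t * x) - 1)) - 1 := sub_pos.2 (one_lt_exp_iff.2 (by positivity))
  have hdiv := (hasDerivAt_const x t).fun_div (((hasDerivAt_id' x).const_mul t).exp.sub_const 1)
    hE.ne'
  refine ((hdiv.exp.sub_const 1).log hA.ne').congr_deriv ?_
  have hy : t * exp (-(t * x)) / (1 - exp (-(t * x))) = t / (exp (t * x) - 1) := by
    rw [exp_neg]
    field_simp
  rw [hy, toddFun, exp_neg, exp_neg]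
  field_simp
  ring

lemma strictMonoOn_add_log_exp_div_exp_sub_one {t : ℝ} (ht : 0 < t) (c : ℝ) :
    StrictMonoOn (fun x => c + t * (x - 1 / 2 - qDigammaSeries t x) +
      log (exp (t / (exp (t * x) - 1)) - 1)) (Ioi 0) := by
  have hderiv {x : ℝ} (hx : 0 < x) := (((hasDerivAt_id' x).sub_const (1 / 2)).sub
    (hasDerivAt_qDigammaSeries ht hx)).const_mul t |>.const_add c |>.add
    (hasDerivAt_log_exp_div_exp_sub_one ht hx)
  refine strictMonoOn_of_hasDerivWithinAt_pos (convex_Ioi 0)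
    (fun x hx => (hderiv hx).continuousAt.continuousWithinAt)
    (fun x hx => (hderiv (interior_subset hx : x ∈ Ioi 0)).hasDerivWithinAt) fun x hx => ?_
  rw [interior_Ioi] at hx
  have hy : exp (-(t * x)) < 1 := exp_lt_one_iff.2 (neg_lt_zero.2 (mul_pos ht hx))
  have := toddFun_div_one_sub_lt_one_add_tsum ht (exp_pos (-(t * x))) hy
  linarith [mul_pos ht (sub_pos.2 this)]

/-- For `q > 1`, `φ̃_q(x) = ψ_q(x) + ln(exp((ln q)/(qˣ − 1)) − 1)` is strictly
increasing on `(0, ∞)`. -/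
theorem varphi_strictMonoOn (q : ℝ) (hq : 1 < q) :
    StrictMonoOn
      (fun x => qDigammaGt q x +
        Real.log (Real.exp (Real.log q / (q ^ x - 1)) - 1))
      (Set.Ioi 0) := by
  have hq0 : 0 < q := by linarith
  simp only [qDigammaGt_eq hq0, rpow_def_of_pos hq0]
  exact strictMonoOn_add_log_exp_div_exp_sub_one (log_pos hq) (-log (q - 1))
end

section
/- Let q > 1 and let φ̃_q(x) = ψ_q(x) + ln(exp((ln q)/(q^x − 1)) − 1). Then lim_{x→0+} φ̃_q(x) = ψ_q(1) − ln q and lim_{x→∞} φ̃_q(x) = ln(ln q/(q − 1)) − (ln q)/2; in particular, the constants ψ_q(1) − ln q and ln(ln q/(q − 1)) − (ln q)/2 in the double inequality ψ_q(1) − ln q − ln(exp((ln q)/(q^x − 1)) − 1) < ψ_q(x) < ln(ln q/(q − 1)) − (ln q)/2 − ln(exp((ln q)/(q^x − 1)) − 1) are best possible. -/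
open Real Set Filter Topology

/-!
Both limits come from splitting `φ̃_q` into pieces with elementary limits. Near `0`, the
recurrence `ψ_q(x + 1) = ψ_q(x) + ln q + t` with `t = ln q / (q^x − 1)` gives
`φ̃_q(x) = ψ_q(x + 1) − ln q + (ln(e^t − 1) − t)`, where `t → ∞` and `ψ_q` is continuous at `1`.
Near `∞`, writing `(ln q)·x = ln(q^x)` gives
`φ̃_q(x) = −ln(q−1) − (ln q)/2 − (ln q)·S(x) + ln(q^x (e^t − 1))`, where
`S(x) = ∑_{k≥1} q^{−kx}/(1 − q^{−k})` tends to `0` by dominated convergence and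
`u (e^{ln q/(u−1)} − 1) → ln q` as `u = q^x → ∞`.
The bounds are then best possible because the two constants are limits of `φ̃_q`.
-/

noncomputable def qDigammaTerm (q x : ℝ) (k : ℕ) : ℝ :=
  q ^ (-(((k : ℝ) + 1) * x)) / (1 - q ^ (-((k : ℝ) + 1)))

lemma qDigammaGt_eq_tsum (q x : ℝ) :
    qDigammaGt q x = -log (q - 1) + log q * (x - 1 / 2 - ∑' k, qDigammaTerm q x k) :=
  rfl

noncomputable def qPhiTilde (q x : ℝ) : ℝ :=
  qDigammaGt q x + log (exp (log q / (q ^ x - 1)) - 1)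

lemma tendsto_mul_exp_div_sub_one_sub_one (c : ℝ) :
    Tendsto (fun u => u * (exp (c / (u - 1)) - 1)) atTop (𝓝 c) := by
  have ht : Tendsto (fun u => c / (u - 1)) atTop (𝓝 0) :=
    tendsto_const_nhds.div_atTop (tendsto_atTop_add_const_right _ (-1) tendsto_id)
  have hut : Tendsto (fun u => u * (c / (u - 1))) atTop (𝓝 c) := by
    refine (add_zero c ▸ tendsto_const_nhds.add ht).congr' ?_
    filter_upwards [eventually_gt_atTop 1] with u hu
    field_simp [(sub_pos.2 hu).ne']
    ring
  -- `exp t - 1 = t · dslope exp 0 t`, and `dslope exp 0` is continuous at `0` with value `1`.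
  have hslope : Tendsto (fun u => dslope exp 0 (c / (u - 1))) atTop (𝓝 1) := by
    have h := (continuousAt_dslope_same.2 (differentiableAt_exp (x := (0 : ℝ)))).tendsto.comp ht
    rwa [dslope_same, Real.deriv_exp, exp_zero] at h
  have h := hut.mul hslope
  rw [mul_one] at h
  refine h.congr fun u => ?_
  have hexp := sub_smul_dslope exp 0 (c / (u - 1))
  rw [sub_zero, smul_eq_mul, exp_zero] at hexp
  rw [mul_assoc, hexp]

lemma tendsto_log_exp_sub_one_sub_self :
    Tendsto (fun t => log (exp t - 1) - t) atTop (𝓝 0) := by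
  have h : Tendsto (fun t => log (1 - exp (-t))) atTop (𝓝 0) := by
    simpa [Function.comp_def] using (continuousAt_log one_ne_zero).tendsto.comp
      (by simpa using tendsto_const_nhds (x := (1 : ℝ)) |>.sub tendsto_exp_neg_atTop_nhds_zero)
  refine h.congr' ?_
  filter_upwards [eventually_gt_atTop 0] with t ht
  have hsplit : exp t - 1 = exp t * (1 - exp (-t)) := by
    rw [mul_sub, mul_one, ← exp_add, add_neg_cancel, exp_zero]
  rw [hsplit, log_mul (exp_ne_zero t) (sub_pos.2 (exp_lt_one_iff.2 (neg_lt_zero.2 ht))).ne', log_exp]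
  ring

section qDigamma

variable {q : ℝ}

lemma rpow_neg_succ_mul (hq : 0 < q) (x : ℝ) (k : ℕ) :
    q ^ (-(((k : ℝ) + 1) * x)) = (q ^ (-x)) ^ (k + 1) := by
  rw [← rpow_natCast, ← rpow_mul hq.le]
  push_cast
  ring_nf

lemma one_sub_rpow_neg_succ_pos (hq : 1 < q) (k : ℕ) : 0 < 1 - q ^ (-((k : ℝ) + 1)) :=
  sub_pos.2 (rpow_lt_one_of_one_lt_of_neg hq (by linarith [k.cast_nonneg (α := ℝ)]))

lemma qDigammaTerm_nonneg (hq : 1 < q) (x : ℝ) (k : ℕ) : 0 ≤ qDigammaTerm q x k :=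
  div_nonneg (by positivity) (one_sub_rpow_neg_succ_pos hq k).le

lemma qDigammaTerm_le (hq : 1 < q) {c x : ℝ} (hcx : c ≤ x) (k : ℕ) :
    qDigammaTerm q x k ≤ (q ^ (-c)) ^ (k + 1) / (1 - q⁻¹) := by
  have hk : (0 : ℝ) ≤ k := k.cast_nonneg
  have hnum : q ^ (-(((k : ℝ) + 1) * x)) ≤ (q ^ (-c)) ^ (k + 1) := by
    rw [← rpow_neg_succ_mul (by linarith), rpow_le_rpow_left_iff hq]
    nlinarith
  have hden : 1 - q⁻¹ ≤ 1 - q ^ (-((k : ℝ) + 1)) := by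
    rw [← rpow_neg_one]
    linarith [rpow_le_rpow_of_exponent_le hq.le (by linarith : -((k : ℝ) + 1) ≤ -1)]
  exact div_le_div₀ (by positivity) hnum (sub_pos.2 (inv_lt_one_of_one_lt₀ hq)) hden

lemma summable_rpow_neg_pow_succ_div (hq : 1 < q) {c : ℝ} (hc : 0 < c) :
    Summable fun k : ℕ => (q ^ (-c)) ^ (k + 1) / (1 - q⁻¹) :=
  ((summable_nat_add_iff 1).2 (summable_geometric_of_lt_one (by positivity)
    (rpow_lt_one_of_one_lt_of_neg hq (neg_neg_of_pos hc)))).div_const _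

lemma summable_qDigammaTerm (hq : 1 < q) {x : ℝ} (hx : 0 < x) : Summable (qDigammaTerm q x) :=
  (summable_rpow_neg_pow_succ_div hq hx).of_nonneg_of_le (qDigammaTerm_nonneg hq x)
    (qDigammaTerm_le hq le_rfl)

lemma tendsto_tsum_qDigammaTerm (hq : 1 < q) {c : ℝ} (hc : 0 < c) {l : Filter ℝ}
    (hl : ∀ᶠ x in l, c ≤ x) {g : ℕ → ℝ} (hg : ∀ k, Tendsto (qDigammaTerm q · k) l (𝓝 (g k))) :
    Tendsto (fun x => ∑' k, qDigammaTerm q x k) l (𝓝 (∑' k, g k)) :=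
  tendsto_tsum_of_dominated_convergence (summable_rpow_neg_pow_succ_div hq hc) hg <|
    hl.mono fun x hx k => by
      rw [norm_of_nonneg (qDigammaTerm_nonneg hq x k)]
      exact qDigammaTerm_le hq hx k

lemma continuousAt_qDigammaGt (hq : 1 < q) {x : ℝ} (hx : 0 < x) :
    ContinuousAt (qDigammaGt q) x := by
  have hS : Tendsto (fun y => ∑' k, qDigammaTerm q y k) (𝓝 x) (𝓝 (∑' k, qDigammaTerm q x k)) :=
    tendsto_tsum_qDigammaTerm hq (half_pos hx) (eventually_ge_nhds (half_lt_self hx)) fun k =>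
      (Continuous.div_const (continuous_const_rpow (by linarith) |>.comp (by fun_prop)) _).tendsto x
  exact tendsto_const_nhds.add (((tendsto_id.sub_const _).sub hS).const_mul _)

lemma tendsto_tsum_qDigammaTerm_atTop (hq : 1 < q) :
    Tendsto (fun x => ∑' k, qDigammaTerm q x k) atTop (𝓝 0) := by
  simpa using tendsto_tsum_qDigammaTerm hq one_pos (eventually_ge_atTop 1) (g := 0) fun k => by
    have h : Tendsto (fun x : ℝ => -(((k : ℝ) + 1) * x)) atTop atBot :=
      tendsto_neg_atTop_atBot.comp (tendsto_id.const_mul_atTop (by positivity))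
    simpa [qDigammaTerm] using ((tendsto_rpow_atBot_of_base_gt_one q hq).comp h).div_const _

lemma qDigammaTerm_sub_qDigammaTerm_add_one (hq : 1 < q) (x : ℝ) (k : ℕ) :
    qDigammaTerm q x k - qDigammaTerm q (x + 1) k = (q ^ (-x)) ^ (k + 1) := by
  have hsplit : q ^ (-(((k : ℝ) + 1) * (x + 1)))
      = q ^ (-(((k : ℝ) + 1) * x)) * q ^ (-((k : ℝ) + 1)) := by
    rw [← rpow_add (by linarith)]
    ring_nf
  rw [qDigammaTerm, qDigammaTerm, hsplit, ← sub_div, ← mul_one_sub, mul_div_assoc,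
    div_self (one_sub_rpow_neg_succ_pos hq k).ne', mul_one, rpow_neg_succ_mul (by linarith)]

lemma tsum_rpow_neg_pow_succ (hq : 1 < q) {x : ℝ} (hx : 0 < x) :
    ∑' k : ℕ, (q ^ (-x)) ^ (k + 1) = (q ^ x - 1)⁻¹ := by
  have h1 : 1 < q ^ x := one_lt_rpow hq hx
  have hr : ‖q ^ (-x)‖ < 1 := by
    rw [norm_of_nonneg (by positivity), rpow_neg (by linarith)]
    exact inv_lt_one_of_one_lt₀ h1
  rw [geom_series_succ _ hr, tsum_geometric_of_norm_lt_one hr, rpow_neg (by linarith)]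
  field_simp [(sub_pos.2 h1).ne']
  ring

lemma qDigammaGt_add_one (hq : 1 < q) {x : ℝ} (hx : 0 < x) :
    qDigammaGt q (x + 1) = qDigammaGt q x + log q + log q / (q ^ x - 1) := by
  have hsum : ∑' k, qDigammaTerm q x k - ∑' k, qDigammaTerm q (x + 1) k = (q ^ x - 1)⁻¹ := by
    rw [← (summable_qDigammaTerm hq hx).tsum_sub (summable_qDigammaTerm hq (by linarith))]
    simp only [qDigammaTerm_sub_qDigammaTerm_add_one hq]
    exact tsum_rpow_neg_pow_succ hq hx
  rw [qDigammaGt_eq_tsum, qDigammaGt_eq_tsum]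
  linear_combination log q * hsum

lemma tendsto_log_div_rpow_sub_one_nhdsGT_zero (hq : 1 < q) :
    Tendsto (fun x : ℝ => log q / (q ^ x - 1)) (𝓝[>] 0) atTop := by
  have hden : Tendsto (fun x : ℝ => q ^ x - 1) (𝓝[>] 0) (𝓝[>] 0) := by
    refine tendsto_nhdsWithin_iff.2 ⟨?_, ?_⟩
    · have h : Continuous fun x : ℝ => q ^ x - 1 :=
        (continuous_const_rpow (by linarith)).sub continuous_const
      simpa using (h.tendsto 0).mono_left nhdsWithin_le_nhds
    · filter_upwards [self_mem_nhdsWithin] with x hx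
      exact sub_pos.2 (one_lt_rpow hq (mem_Ioi.1 hx))
  simpa [div_eq_mul_inv] using (tendsto_inv_nhdsGT_zero.comp hden).const_mul_atTop (log_pos hq)

lemma tendsto_qPhiTilde_nhdsGT_zero (hq : 1 < q) :
    Tendsto (qPhiTilde q) (𝓝[>] 0) (𝓝 (qDigammaGt q 1 - log q)) := by
  have hshift : Tendsto (fun x => qDigammaGt q (x + 1)) (𝓝[>] 0) (𝓝 (qDigammaGt q 1)) :=
    (continuousAt_qDigammaGt hq one_pos).tendsto.comp
      (((continuous_add_const 1).tendsto' 0 1 (zero_add 1)).mono_left nhdsWithin_le_nhds)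
  have hlog := tendsto_log_exp_sub_one_sub_self.comp (tendsto_log_div_rpow_sub_one_nhdsGT_zero hq)
  have h := (hshift.sub_const (log q)).add hlog
  rw [add_zero] at h
  refine h.congr' ?_
  filter_upwards [self_mem_nhdsWithin] with x hx
  simp only [Function.comp_apply, qPhiTilde, qDigammaGt_add_one hq hx]
  ring

lemma tendsto_qPhiTilde_atTop (hq : 1 < q) :
    Tendsto (qPhiTilde q) atTop (𝓝 (log (log q / (q - 1)) - log q / 2)) := by
  have hL : 0 < log q := log_pos hq
  have hprod := (continuousAt_log hL.ne').tendsto.comp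
    ((tendsto_mul_exp_div_sub_one_sub_one (log q)).comp (tendsto_rpow_atTop_of_base_gt_one q hq))
  have h := ((tendsto_tsum_qDigammaTerm_atTop hq).const_mul (log q)).const_sub
    (-log (q - 1) - log q / 2) |>.add hprod
  have hlim : log (log q / (q - 1)) - log q / 2
      = -log (q - 1) - log q / 2 - log q * 0 + log (log q) := by
    rw [log_div hL.ne' (sub_pos.2 hq).ne']
    ring
  rw [hlim]
  refine h.congr' ?_
  filter_upwards [eventually_gt_atTop 0] with x hx
  have ht : 0 < log q / (q ^ x - 1) := div_pos hL (sub_pos.2 (one_lt_rpow hq hx))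
  simp only [Function.comp_apply, qPhiTilde, qDigammaGt_eq_tsum]
  rw [log_mul (by positivity) (sub_pos.2 (one_lt_exp_iff.2 ht)).ne', log_rpow (by linarith)]
  ring

end qDigamma

/-- For `q > 1`, `φ̃_q(x) → ψ_q(1) − ln q` as `x → 0⁺` and
`φ̃_q(x) → ln(ln q/(q−1)) − (ln q)/2` as `x → ∞`; consequently, the constants
`ψ_q(1) − ln q` and `ln(ln q/(q−1)) − (ln q)/2` in the double inequality are
best possible. -/
theorem varphi_limits_best_possible (q : ℝ) (hq : 1 < q) :
    Tendsto
      (fun x => qDigammaGt q x +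
        Real.log (Real.exp (Real.log q / (q ^ x - 1)) - 1))
      (𝓝[>] 0) (𝓝 (qDigammaGt q 1 - Real.log q)) ∧
    Tendsto
      (fun x => qDigammaGt q x +
        Real.log (Real.exp (Real.log q / (q ^ x - 1)) - 1))
      atTop (𝓝 (Real.log (Real.log q / (q - 1)) - Real.log q / 2)) ∧
    (∀ a : ℝ,
      (∀ x : ℝ, 0 < x →
        a - Real.log (Real.exp (Real.log q / (q ^ x - 1)) - 1) < qDigammaGt q x) →
      a ≤ qDigammaGt q 1 - Real.log q) ∧
    (∀ b : ℝ,
      (∀ x : ℝ, 0 < x →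
        qDigammaGt q x <
          b - Real.log (Real.exp (Real.log q / (q ^ x - 1)) - 1)) →
      Real.log (Real.log q / (q - 1)) - Real.log q / 2 ≤ b) := by
  have hzero := tendsto_qPhiTilde_nhdsGT_zero hq
  have htop := tendsto_qPhiTilde_atTop hq
  refine ⟨hzero, htop, fun a ha => ge_of_tendsto hzero ?_, fun b hb => le_of_tendsto htop ?_⟩
  · filter_upwards [self_mem_nhdsWithin] with x hx
    exact (sub_lt_iff_lt_add.1 (ha x hx)).le
  · filter_upwards [eventually_gt_atTop 0] with x hx
    exact (lt_sub_iff_add_lt.1 (hb x hx)).le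
end
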